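/- Let D be an effective divisor on a metric graph Γ such that D is P-reduced for every point P ∈ Γ. Then |D| = {D}, i.e. D is the unique effective divisor in its linear equivalence class. -/

import Mathlib

open Set

noncomputable section

/-- `φ` parametrizes the set `U` as a star with `n` rays of length `ρ` centred at `P`,
isometrically for the path metric of the star: each ray is parametrized by arc length from
`P = φ k 0`, and two points on different rays are at distance the sum of their distances
to the centre `P`. -/
def IsStarMap {X : Type} [MetricSpace X] (φ : ℕ → ℝ → X) (U : Set X) (P : X)
    (n : ℕ) (ρ : ℝ) : Prop :=
  (∀ k < n, φ k 0 = P) ∧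
  (∀ k < n, ∀ s ∈ Icc (0:ℝ) ρ, ∀ t ∈ Icc (0:ℝ) ρ, dist (φ k s) (φ k t) = |s - t|) ∧
  (∀ k < n, ∀ l < n, k ≠ l → ∀ s ∈ Icc (0:ℝ) ρ, ∀ t ∈ Icc (0:ℝ) ρ,
    dist (φ k s) (φ l t) = s + t) ∧
  U = ⋃ k ∈ Finset.range n, φ k '' Icc (0:ℝ) ρ

/-- A metric graph: a compact connected metric space in which every point `P` has a
neighbourhood isometric to a star with `valence P ≥ 1` rays, `P` corresponding to the
centre of the star. -/
structure MetricGraph where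
  carrier : Type
  [ms : MetricSpace carrier]
  [cpt : CompactSpace carrier]
  [conn : ConnectedSpace carrier]
  [nem : Nonempty carrier]
  valence : carrier → ℕ
  valence_pos : ∀ P, 1 ≤ valence P
  isStar : ∀ P : carrier, ∃ ρ > (0:ℝ), ∃ U ∈ nhds P, ∃ φ, IsStarMap φ U P (valence P) ρ

attribute [instance] MetricGraph.ms MetricGraph.cpt MetricGraph.conn MetricGraph.nem

namespace MetricGraph

variable (Γ : MetricGraph)

/-- The vertices: the points of valence different from 2. -/
def vertexSet : Set Γ.carrier := {P | Γ.valence P ≠ 2}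

/-- The edges: the connected components of the complement of the vertex set. -/
def edgeSet : Set (Set Γ.carrier) :=
  {e | ∃ P, P ∉ Γ.vertexSet ∧ e = connectedComponentIn Γ.vertexSetᶜ P}

/-- The genus `g(Γ) = |E(Γ)| - |V(Γ)| + 1`. -/
def genus : ℤ := (Nat.card ↥Γ.edgeSet : ℤ) - (Nat.card ↥Γ.vertexSet : ℤ) + 1

/-- A divisor on `Γ`: a finite formal integer linear combination of points of `Γ`. -/
abbrev Divisor := Γ.carrier →₀ ℤ

variable {Γ}

/-- The degree of a divisor: the sum of its coefficients. -/
def deg (D : Γ.Divisor) : ℤ := D.sum fun _ n => n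

/-- A divisor is effective if all its coefficients are nonnegative. -/
def Effective (D : Γ.Divisor) : Prop := ∀ P, 0 ≤ D P

/-- `f` has (integer) slopes `s k` along the rays of some star neighbourhood of `P`:
`f` is affine with slope `s k` along the `k`-th direction emanating from `P`. -/
def HasSlopesAt (f : Γ.carrier → ℝ) (P : Γ.carrier) (s : ℕ → ℤ) : Prop :=
  ∃ ρ > (0:ℝ), ∃ U ∈ nhds P, ∃ φ, IsStarMap φ U P (Γ.valence P) ρ ∧
    ∀ k < Γ.valence P, ∀ t ∈ Icc (0:ℝ) ρ, f (φ k t) = f P + (s k : ℝ) * t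

/-- A rational function on `Γ`: a continuous function which is piecewise affine with
integer slopes, i.e. affine with integer slope along each direction emanating from any
point of `Γ`. -/
def IsRational (f : Γ.carrier → ℝ) : Prop :=
  Continuous f ∧ ∀ P, ∃ s : ℕ → ℤ, HasSlopesAt f P s

/-- The divisor of the rational function `f` has coefficient `d` at `P`: `d` is the sum
of the slopes of `f` in all directions emanating from `P`. -/
def DivAt (f : Γ.carrier → ℝ) (P : Γ.carrier) (d : ℤ) : Prop :=
  ∃ s : ℕ → ℤ, HasSlopesAt f P s ∧ d = ∑ k ∈ Finset.range (Γ.valence P), s k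

/-- Two divisors are linearly equivalent if their difference is the divisor of a
rational function. -/
def LinEquiv (D₁ D₂ : Γ.Divisor) : Prop :=
  ∃ f : Γ.carrier → ℝ, IsRational f ∧ ∀ P, DivAt f P (D₂ P - D₁ P)

/-- The linear system of `D`: all effective divisors linearly equivalent to `D`. -/
def linSys (D : Γ.Divisor) : Set Γ.Divisor :=
  {D' | Effective D' ∧ LinEquiv D D'}

/-- The rank of a divisor: `-1` if `|D| = ∅`, and otherwise the maximal `r ≥ 0` such
that `|D - E| ≠ ∅` for every effective divisor `E` of degree `r`. -/
def rank (D : Γ.Divisor) : ℤ :=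
  sSup ({-1} ∪ {r : ℤ | 0 ≤ r ∧
    ∀ E : Γ.Divisor, Effective E → deg E = r → (linSys (D - E)).Nonempty})

/-- The set `A` has outgoing degree `m` at its boundary point `Q`: for every sufficiently
small star neighbourhood of `Q`, exactly `m` of the rays (segments) emanating from `Q`
leave `A`. -/
def OutDegEq (A : Set Γ.carrier) (Q : Γ.carrier) (m : ℕ) : Prop :=
  ∃ ρ₀ > (0:ℝ), ∀ ρ ∈ Ioc (0:ℝ) ρ₀, ∀ U ∈ nhds Q, ∀ φ,
    IsStarMap φ U Q (Γ.valence Q) ρ →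
      m = Nat.card {k : ℕ // k < Γ.valence Q ∧ ∀ t ∈ Ioc (0:ℝ) ρ, φ k t ∉ A}

/-- `D` is `P`-reduced: for every nonempty `S ⊆ Supp(D) \ {P}`, the complement of the
connected component of `Γ \ S` containing `P` has a non-saturated boundary point `Q`,
i.e. a boundary point `Q` with `D(Q)` strictly smaller than the outgoing degree at `Q`. -/
def Reduced (D : Γ.Divisor) (P : Γ.carrier) : Prop :=
  ∀ S : Set Γ.carrier, S.Nonempty → S ⊆ (D.support : Set Γ.carrier) \ {P} →
    ∃ Q ∈ frontier ((connectedComponentIn Sᶜ P)ᶜ),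
      ∃ m : ℕ, OutDegEq ((connectedComponentIn Sᶜ P)ᶜ) Q m ∧ D Q < (m : ℤ)

variable (Γ) in
/-- A spanning tree of `Γ`: a closed connected simply connected subset containing all
vertices which is the union of the vertex set and the closures of all but `genus Γ` of
the edges. -/
def IsSpanningTree (T : Set Γ.carrier) : Prop :=
  IsClosed T ∧ IsConnected T ∧ SimplyConnectedSpace T ∧ Γ.vertexSet ⊆ T ∧
  ∃ E' ⊆ Γ.edgeSet, ((Nat.card ↥(Γ.edgeSet \ E') : ℤ) = Γ.genus) ∧
    T = Γ.vertexSet ∪ ⋃ e ∈ E', closure e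

end MetricGraph

/-! Let `D' = D + div f` be effective. The maximum set `A` of `f` is closed, and at each point of
its frontier `f` strictly decreases in some direction and nowhere increases, so `D` has a chip
there. If `f` were not constant, pick `P ∉ A` and take `S = ∂A ⊆ Supp D ∖ {P}`. The component
`U` of `Γ ∖ S` containing `P` misses `A`, and every boundary point `Q` of `Uᶜ` lies in `S`, so
`f` has slope `≤ -1` along each of the `outdeg Q` segments entering `U`. Thus
`0 ≤ D'(Q) ≤ D(Q) - outdeg Q`, i.e. every boundary point is saturated, contradicting
`P`-reducedness. Hence `f` is constant and `D' = D`. -/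

theorem IsPreconnected.subset_compl_of_disjoint_frontier {α : Type*} [TopologicalSpace α]
    {s A : Set α} (hs : IsPreconnected s) (hsA : Disjoint s (frontier A)) {x : α}
    (hxs : x ∈ s) (hx : x ∉ closure A) : s ⊆ Aᶜ := by
  have hcover : s ⊆ interior A ∪ (closure A)ᶜ := fun y hy => by
    by_cases hyA : y ∈ closure A
    · exact Or.inl (by_contra fun hyi => hsA.notMem_of_mem_left hy ⟨hyA, hyi⟩)
    · exact Or.inr hyA
  have hdisj : Disjoint (interior A) (closure A)ᶜ :=
    disjoint_compl_right.mono_left (interior_subset.trans subset_closure)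
  rcases hs.subset_or_subset isOpen_interior isClosed_closure.isOpen_compl hdisj hcover with h | h
  · exact absurd (interior_subset.trans subset_closure (h hxs)) hx
  · exact h.trans (compl_subset_compl.2 subset_closure)

theorem frontier_connectedComponentIn_compl_subset {α : Type*} [TopologicalSpace α]
    [LocallyConnectedSpace α] {F : Set α} (hF : IsClosed F) (x : α) :
    frontier (connectedComponentIn Fᶜ x) ⊆ F := by
  intro y hy
  by_contra hyF
  have hopen : IsOpen (connectedComponentIn Fᶜ x) := hF.isOpen_compl.connectedComponentIn
  obtain ⟨z, hzy, hzx⟩ := mem_closure_iff_nhds.1 hy.1 _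
    (connectedComponentIn_mem_nhds (hF.isOpen_compl.mem_nhds hyF))
  have hyx : y ∈ connectedComponentIn Fᶜ x := by
    rw [connectedComponentIn_eq hzx, ← connectedComponentIn_eq hzy]
    exact mem_connectedComponentIn hyF
  exact hy.2 (hopen.interior_eq.symm ▸ hyx)

namespace IsStarMap

variable {X : Type} [MetricSpace X] {φ : ℕ → ℝ → X} {U : Set X} {P : X} {n : ℕ} {ρ : ℝ}

theorem exists_eq_of_mem (hφ : IsStarMap φ U P n ρ) {x : X} (hx : x ∈ U) :
    ∃ k < n, ∃ t ∈ Icc (0:ℝ) ρ, φ k t = x := by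
  rw [hφ.2.2.2] at hx
  simp only [mem_iUnion, Finset.mem_range, mem_image] at hx
  obtain ⟨k, hk, t, ht, rfl⟩ := hx
  exact ⟨k, hk, t, ht, rfl⟩

theorem dist_apply_center (hφ : IsStarMap φ U P n ρ) {k : ℕ} (hk : k < n) {t : ℝ}
    (ht : t ∈ Icc (0:ℝ) ρ) : dist (φ k t) P = t := by
  have h := hφ.2.1 k hk t ht 0 ⟨le_rfl, ht.1.trans ht.2⟩
  rwa [hφ.1 k hk, sub_zero, abs_of_nonneg ht.1] at h

theorem subset_closedBall (hφ : IsStarMap φ U P n ρ) : U ⊆ Metric.closedBall P ρ := by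
  intro x hx
  obtain ⟨k, hk, t, ht, rfl⟩ := hφ.exists_eq_of_mem hx
  rw [Metric.mem_closedBall, hφ.dist_apply_center hk ht]
  exact ht.2

theorem isPreconnected (hφ : IsStarMap φ U P n ρ) : IsPreconnected U := by
  refine isPreconnected_of_forall P fun y hy => ?_
  obtain ⟨k, hk, t, ht, rfl⟩ := hφ.exists_eq_of_mem hy
  have hray : LipschitzOnWith 1 (φ k) (Icc (0:ℝ) ρ) :=
    LipschitzOnWith.of_dist_le_mul fun a ha b hb => by
      rw [hφ.2.1 k hk a ha b hb, NNReal.coe_one, one_mul, Real.dist_eq]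
  refine ⟨φ k '' Icc (0:ℝ) ρ, ?_, ⟨0, ⟨le_rfl, ht.1.trans ht.2⟩, hφ.1 k hk⟩, ⟨t, ht, rfl⟩, ?_⟩
  · rw [hφ.2.2.2]
    exact subset_biUnion_of_mem (u := fun k => φ k '' Icc (0:ℝ) ρ)
      (Finset.mem_coe.2 (Finset.mem_range.2 hk))
  · exact isPreconnected_Icc.image _ hray.continuousOn

theorem exists_mem_nhds_of_le (hφ : IsStarMap φ U P n ρ) (hU : U ∈ nhds P) {ρ' : ℝ}
    (hρ' : 0 < ρ') (hle : ρ' ≤ ρ) : ∃ U' ∈ nhds P, IsStarMap φ U' P n ρ' := by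
  have hIcc : Icc (0:ℝ) ρ' ⊆ Icc 0 ρ := Icc_subset_Icc_right hle
  refine ⟨⋃ k ∈ Finset.range n, φ k '' Icc (0:ℝ) ρ', ?_, hφ.1,
    fun k hk s hs t ht => hφ.2.1 k hk s (hIcc hs) t (hIcc ht),
    fun k hk l hl hkl s hs t ht => hφ.2.2.1 k hk l hl hkl s (hIcc hs) t (hIcc ht), rfl⟩
  obtain ⟨ε, hε, hball⟩ := Metric.mem_nhds_iff.1 hU
  refine Filter.mem_of_superset (Metric.ball_mem_nhds P (lt_min hε hρ')) fun x hx => ?_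
  obtain ⟨k, hk, t, ht, rfl⟩ :=
    hφ.exists_eq_of_mem (hball (Metric.ball_subset_ball (min_le_left _ _) hx))
  have htρ' : t < ρ' := by
    rw [Metric.mem_ball, hφ.dist_apply_center hk ht] at hx
    exact hx.trans_le (min_le_right _ _)
  simp only [mem_iUnion, Finset.mem_range, mem_image]
  exact ⟨k, hk, t, ⟨ht.1, htρ'.le⟩, rfl⟩

end IsStarMap

section Slopes

variable {X : Type*} {f : X → ℝ} {φ : ℕ → ℝ → X} {Q : X} {n : ℕ} {ρ : ℝ} {s : ℕ → ℤ}

theorem slope_nonpos_of_isMax (hmax : ∀ y, f y ≤ f Q) (hρ : 0 < ρ)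
    (hsl : ∀ k < n, ∀ t ∈ Icc (0:ℝ) ρ, f (φ k t) = f Q + s k * t) {k : ℕ} (hk : k < n) :
    s k ≤ 0 := by
  have h := hmax (φ k ρ)
  rw [hsl k hk ρ ⟨hρ.le, le_rfl⟩] at h
  have : (s k : ℝ) ≤ 0 := nonpos_of_mul_nonpos_left (by linarith) hρ
  exact_mod_cast this

theorem slope_le_neg_one_of_lt (hsl : ∀ k < n, ∀ t ∈ Icc (0:ℝ) ρ, f (φ k t) = f Q + s k * t)
    {k : ℕ} (hk : k < n) {t : ℝ} (ht : t ∈ Icc (0:ℝ) ρ) (hlt : f (φ k t) < f Q) :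
    s k ≤ -1 := by
  rw [hsl k hk t ht] at hlt
  have : (s k : ℝ) < 0 := neg_of_mul_neg_left (by linarith) ht.1
  have : s k < 0 := by exact_mod_cast this
  omega

theorem sum_slopes_le_neg_card (hmax : ∀ y, f y ≤ f Q) (hρ : 0 < ρ)
    (hsl : ∀ k < n, ∀ t ∈ Icc (0:ℝ) ρ, f (φ k t) = f Q + s k * t) {T : Finset ℕ}
    (hT : ∀ k ∈ T, k < n ∧ ∃ t ∈ Icc (0:ℝ) ρ, f (φ k t) < f Q) :
    ∑ k ∈ Finset.range n, s k ≤ -(T.card : ℤ) := by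
  have hTn : T ⊆ Finset.range n := fun k hk => Finset.mem_range.2 (hT k hk).1
  calc ∑ k ∈ Finset.range n, s k
      ≤ ∑ k ∈ T, s k := Finset.sum_le_sum_of_subset_of_nonpos' hTn fun k hk _ =>
        slope_nonpos_of_isMax hmax hρ hsl (Finset.mem_range.1 hk)
    _ ≤ T.card • (-1 : ℤ) := Finset.sum_le_card_nsmul _ _ _ fun k hk => by
        obtain ⟨hkn, t, ht, hlt⟩ := hT k hk
        exact slope_le_neg_one_of_lt hsl hkn ht hlt
    _ = -(T.card : ℤ) := by simp

end Slopes

namespace MetricGraph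

variable {Γ : MetricGraph}

instance : LocallyConnectedSpace Γ.carrier := by
  refine locallyConnectedSpace_iff_connected_subsets.2 fun P V hV => ?_
  obtain ⟨ρ, hρ, U, hU, φ, hφ⟩ := Γ.isStar P
  obtain ⟨ε, hε, hball⟩ := Metric.mem_nhds_iff.1 hV
  obtain ⟨U', hU', hφ'⟩ := hφ.exists_mem_nhds_of_le hU (lt_min hρ (half_pos hε)) (min_le_left _ _)
  refine ⟨U', hU', hφ'.isPreconnected, hφ'.subset_closedBall.trans fun x hx => hball ?_⟩
  rw [Metric.mem_closedBall] at hx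
  rw [Metric.mem_ball]
  linarith [min_le_right ρ (ε / 2)]

variable {f : Γ.carrier → ℝ} {Q : Γ.carrier} {d : ℤ}

theorem DivAt.eq_zero_of_forall_eq {c : ℝ} (hf : ∀ x, f x = c) (hd : DivAt f Q d) : d = 0 := by
  obtain ⟨s, ⟨ρ, hρ, U, hU, φ, hφ, hsl⟩, rfl⟩ := hd
  refine Finset.sum_eq_zero fun k hk => ?_
  have h := hsl k (Finset.mem_range.1 hk) ρ ⟨hρ.le, le_rfl⟩
  rw [hf, hf] at h
  have : (s k : ℝ) = 0 := (mul_eq_zero.1 (by linarith : (s k : ℝ) * ρ = 0)).resolve_right hρ.ne'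
  exact_mod_cast this

theorem DivAt.le_neg_one_of_mem_frontier (hmax : ∀ y, f y ≤ f Q)
    (hQ : Q ∈ frontier (f ⁻¹' {f Q})) (hd : DivAt f Q d) : d ≤ -1 := by
  obtain ⟨s, ⟨ρ, hρ, U, hU, φ, hφ, hsl⟩, rfl⟩ := hd
  rw [← frontier_compl] at hQ
  obtain ⟨x, hxU, hx⟩ := mem_closure_iff_nhds.1 (frontier_subset_closure hQ) U hU
  obtain ⟨k, hk, t, ht, rfl⟩ := hφ.exists_eq_of_mem hxU
  have hlt : f (φ k t) < f Q := (hmax _).lt_of_ne hx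
  simpa using sum_slopes_le_neg_card (T := {k}) hmax hρ hsl (by simpa using ⟨hk, t, ht, hlt⟩)

theorem DivAt.le_neg_of_outDegEq {B : Set Γ.carrier} {m : ℕ} (hmax : ∀ y, f y ≤ f Q)
    (hB : ∀ y ∈ B, f y < f Q) (hm : OutDegEq Bᶜ Q m) (hd : DivAt f Q d) : d ≤ -(m : ℤ) := by
  classical
  obtain ⟨s, ⟨ρ, hρ, U, hU, φ, hφ, hsl⟩, rfl⟩ := hd
  obtain ⟨ρ₀, hρ₀, hm⟩ := hm
  have hρ' : 0 < min ρ ρ₀ := lt_min hρ hρ₀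
  obtain ⟨U', hU', hφ'⟩ := hφ.exists_mem_nhds_of_le hU hρ' (min_le_left _ _)
  set T := (Finset.range (Γ.valence Q)).filter fun k => ∀ t ∈ Ioc 0 (min ρ ρ₀), φ k t ∉ Bᶜ
  have hmT : m = T.card := by
    rw [hm _ ⟨hρ', min_le_right _ _⟩ U' hU' φ hφ', ← Nat.card_eq_finsetCard]
    exact Nat.card_congr (Equiv.subtypeEquivRight fun k => by simp [T])
  rw [hmT]
  refine sum_slopes_le_neg_card hmax hρ'
    (fun k hk t ht => hsl k hk t ⟨ht.1, ht.2.trans (min_le_left _ _)⟩) fun k hk => ?_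
  obtain ⟨hkn, hray⟩ := Finset.mem_filter.1 hk
  exact ⟨Finset.mem_range.1 hkn, min ρ ρ₀, ⟨hρ'.le, le_rfl⟩,
    hB _ (not_not.1 (hray _ ⟨hρ', le_rfl⟩))⟩

theorem mem_linSys_self {D : Γ.Divisor} (hD : Effective D) : D ∈ linSys D := by
  have hzero : ∀ P, HasSlopesAt (fun _ => (0:ℝ)) P 0 := fun P => by
    obtain ⟨ρ, hρ, U, hU, φ, hφ⟩ := Γ.isStar P
    exact ⟨ρ, hρ, U, hU, φ, hφ, fun _ _ _ _ => by simp⟩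
  exact ⟨hD, fun _ => 0, ⟨continuous_const, fun P => ⟨0, hzero P⟩⟩,
    fun P => ⟨0, hzero P, by simp⟩⟩

variable {D D' : Γ.Divisor}

theorem frontier_maxSet_subset_support (hD' : Effective D') (hf : Continuous f)
    (hdiv : ∀ P, DivAt f P (D' P - D P)) {x₀ : Γ.carrier} (hx₀ : ∀ y, f y ≤ f x₀) :
    frontier (f ⁻¹' {f x₀}) ⊆ D.support := by
  intro Q hQ
  have hfQ : f Q = f x₀ := (isClosed_singleton.preimage hf).frontier_subset hQ
  have h := (hdiv Q).le_neg_one_of_mem_frontier (hfQ ▸ hx₀) (hfQ ▸ hQ)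
  have := hD' Q
  exact Finsupp.mem_support_iff.2 (by omega)

theorem Reduced.le_of_divAt {P : Γ.carrier} (hred : Reduced D P) (hD' : Effective D')
    (hf : Continuous f) (hdiv : ∀ Q, DivAt f Q (D' Q - D Q)) (y : Γ.carrier) : f y ≤ f P := by
  obtain ⟨x₀, -, hx₀⟩ := isCompact_univ.exists_isMaxOn univ_nonempty hf.continuousOn
  replace hx₀ : ∀ y, f y ≤ f x₀ := fun y => hx₀ (mem_univ y)
  refine (hx₀ y).trans (not_lt.1 fun hP => ?_)
  set A := f ⁻¹' {f x₀}
  have hA : IsClosed A := isClosed_singleton.preimage hf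
  have hPA : P ∉ closure A := by
    rw [hA.closure_eq]
    exact hP.ne
  have hS : frontier A ⊆ (D.support : Set Γ.carrier) \ {P} := fun Q hQ =>
    ⟨frontier_maxSet_subset_support hD' hf hdiv hx₀ hQ,
      fun hQP => hPA ((mem_singleton_iff.1 hQP) ▸ frontier_subset_closure hQ)⟩
  have hSne : (frontier A).Nonempty :=
    nonempty_frontier_iff.2 ⟨⟨x₀, rfl⟩, fun h => hPA (h ▸ subset_closure (mem_univ P))⟩
  obtain ⟨Q, hQ, m, hm, hlt⟩ := hred _ hSne hS
  set U₀ := connectedComponentIn (frontier A)ᶜ P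
  have hU₀ : ∀ z ∈ U₀, f z < f x₀ := fun z hz =>
    (hx₀ z).lt_of_ne (isPreconnected_connectedComponentIn.subset_compl_of_disjoint_frontier
      (subset_compl_iff_disjoint_right.1 (connectedComponentIn_subset _ _))
      (mem_connectedComponentIn (show P ∉ frontier A from fun h => hPA (frontier_subset_closure h)))
      hPA hz)
  have hfQ : f Q = f x₀ := hA.frontier_subset
    (frontier_connectedComponentIn_compl_subset isClosed_frontier P (frontier_compl U₀ ▸ hQ))
  have := (hdiv Q).le_neg_of_outDegEq (hfQ ▸ hx₀) (hfQ ▸ hU₀) hm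
  have := hD' Q
  omega

end MetricGraph

open MetricGraph in
/-- If an effective divisor `D` on a metric graph `Γ` is `P`-reduced for every point
`P ∈ Γ`, then `|D| = {D}`. -/
theorem linSys_eq_singleton_of_forall_reduced (Γ : MetricGraph) (D : Γ.Divisor)
    (hD : Effective D) (h : ∀ P : Γ.carrier, Reduced D P) :
    linSys D = {D} := by
  refine Subset.antisymm (fun D' hD' => ?_) (singleton_subset_iff.2 (mem_linSys_self hD))
  obtain ⟨hD'eff, f, hf, hdiv⟩ := hD'
  have hconst : ∀ P Q, f Q = f P := fun P Q =>
    le_antisymm ((h P).le_of_divAt hD'eff hf.1 hdiv Q) ((h Q).le_of_divAt hD'eff hf.1 hdiv P)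
  exact mem_singleton_iff.2 <| Finsupp.ext fun P =>
    sub_eq_zero.1 ((hdiv P).eq_zero_of_forall_eq (hconst P))
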